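/- Let X and Y be metric spaces such that X is Gromov hyperbolic, and let f : Y → X be a quasi-isometry. Then Y is Gromov hyperbolic. -/

import Mathlib

/-!
A geodesic of `Y` is mapped by `f` to a (not necessarily continuous) quasi-geodesic of `X`. By the
Morse lemma, in the `δ`-hyperbolic space `X` such a quasi-geodesic and any geodesic with the same
endpoints lie within a uniform distance `D` of each other. Hence a geodesic triangle of `Y` is
mapped close to a geodesic triangle of `X`, which is `δ`-slim, and the lower quasi-isometry bound
pulls slimness back to `Y`.
-/

open Set

/-- `g` parametrizes a geodesic from `x` to `y` (on the interval `[0, dist x y]`). -/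
def IsGeodesic {X : Type*} [MetricSpace X] (x y : X) (g : ℝ → X) : Prop :=
  g 0 = x ∧ g (dist x y) = y ∧
    ∀ s ∈ Icc (0:ℝ) (dist x y), ∀ t ∈ Icc (0:ℝ) (dist x y), dist (g s) (g t) = |s - t|

/-- A geodesic metric space: any two points are joined by a geodesic. -/
def GeodesicSpace (X : Type*) [MetricSpace X] : Prop :=
  ∀ x y : X, ∃ g : ℝ → X, IsGeodesic x y g

/-- All geodesic triangles of `X` are `δ`-slim. -/
def SlimTriangles (X : Type*) [MetricSpace X] (δ : ℝ) : Prop :=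
  ∀ x y z : X, ∀ g₁ g₂ g₃ : ℝ → X,
    IsGeodesic x y g₁ → IsGeodesic y z g₂ → IsGeodesic x z g₃ →
    ∀ p ∈ g₃ '' Icc (0:ℝ) (dist x z),
      ∃ q ∈ g₁ '' Icc (0:ℝ) (dist x y) ∪ g₂ '' Icc (0:ℝ) (dist y z), dist p q ≤ δ

open Metric

section

variable {X Y : Type*} [MetricSpace X] [MetricSpace Y]

def IsQuasiIsometricEmbedding (k c : ℝ) (f : Y → X) : Prop :=
  ∀ y y' : Y, (1 / k) * dist y y' - c ≤ dist (f y) (f y') ∧ dist (f y) (f y') ≤ k * dist y y' + c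

def IsQuasiGeodesic (k c : ℝ) (x z : X) (T : ℝ) (q : ℝ → X) : Prop :=
  0 ≤ T ∧ q 0 = x ∧ q T = z ∧ ∀ a ∈ Icc 0 T, ∀ b ∈ Icc 0 T,
    (1 / k) * |a - b| - c ≤ dist (q a) (q b) ∧ dist (q a) (q b) ≤ k * |a - b| + c

def IsDiscretePath (C : ℝ) (N : ℕ) (p : ℕ → X) (x z : X) : Prop :=
  p 0 = x ∧ p N = z ∧ ∀ i < N, dist (p i) (p (i + 1)) ≤ C

def DiscretelyConnected (C A B : ℝ) (S : Set X) : Prop :=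
  ∀ x ∈ S, ∀ z ∈ S, ∃ (N : ℕ) (p : ℕ → X), IsDiscretePath C N p x z ∧
    (N : ℝ) ≤ A * dist x z + B ∧ ∀ i ≤ N, p i ∈ S

theorem Nat.sq_le_two_pow {m : ℕ} (hm : 4 ≤ m) : m ^ 2 ≤ 2 ^ m := by
  induction m, hm using Nat.le_induction with
  | base => norm_num
  | succ n hn ih =>
    have : 2 * n + 1 ≤ n ^ 2 := by nlinarith
    calc (n + 1) ^ 2 = n ^ 2 + (2 * n + 1) := by ring
      _ ≤ 2 ^ n + 2 ^ n := by omega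
      _ = 2 ^ (n + 1) := by ring

theorem Nat.sq_clog_two_sub_one_le (N : ℕ) : (Nat.clog 2 N - 1) ^ 2 ≤ N := by
  rcases Nat.lt_or_ge N 2 with hN | hN
  · simp [Nat.clog_of_right_le_one (Nat.le_of_lt_succ hN)]
  · have hlt : 2 ^ (Nat.clog 2 N - 1) < N := Nat.pow_pred_clog_lt_self one_lt_two hN
    set m := Nat.clog 2 N - 1
    rcases Nat.lt_or_ge m 4 with hm | hm
    · interval_cases m <;> omega
    · exact (Nat.sq_le_two_pow hm).trans hlt.le

theorem le_of_sub_sq_le {a b γ R : ℝ} (h : (R - γ) ^ 2 ≤ a * R + b) :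
    R ≤ 2 * |γ| + |a| + |b| + 1 := by
  by_contra! hR
  have hR0 : 0 ≤ R := by linarith [abs_nonneg a, abs_nonneg b, abs_nonneg γ]
  have h1 : |a| + |γ| + |b| + 1 < R - γ := by linarith [le_abs_self γ]
  have h2 : a * R + b ≤ |a| * (R - γ) + |a| * |γ| + |b| := by
    have := mul_le_mul_of_nonneg_right (le_abs_self a) hR0
    have := mul_le_mul_of_nonneg_left (le_abs_self γ) (abs_nonneg a)
    linarith [le_abs_self b]
  nlinarith [abs_nonneg a, abs_nonneg b, abs_nonneg γ]

/-- Since `(clog₂ N - 1)² ≤ N`, the hypotheses give a quadratic inequality for `R`. -/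
theorem exists_le_of_le_mul_clog (δ a b C : ℝ) (hδ : 0 ≤ δ) :
    ∃ D, ∀ (R : ℝ) (N : ℕ), (N : ℝ) ≤ a * R + b → R ≤ δ * Nat.clog 2 N + C → R ≤ D := by
  refine ⟨max (C + δ) (2 * |C + δ| + |δ ^ 2 * a| + |δ ^ 2 * b| + 1), fun R N hN hR => ?_⟩
  rcases le_or_gt R (C + δ) with hRγ | hRγ
  · exact le_max_of_le_left hRγ
  refine le_max_of_le_right (le_of_sub_sq_le (b := δ ^ 2 * b) ?_)
  set m : ℕ := Nat.clog 2 N - 1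
  have hm : (Nat.clog 2 N : ℝ) ≤ m + 1 := by norm_cast; omega
  have hm2 : (m : ℝ) ^ 2 ≤ N := by exact_mod_cast Nat.sq_clog_two_sub_one_le N
  have hRm : R - (C + δ) ≤ δ * m := by nlinarith
  calc (R - (C + δ)) ^ 2 ≤ (δ * m) ^ 2 := pow_le_pow_left₀ (by linarith) hRm 2
    _ = δ ^ 2 * m ^ 2 := by ring
    _ ≤ δ ^ 2 * (a * R + b) := mul_le_mul_of_nonneg_left (hm2.trans hN) (sq_nonneg δ)
    _ = δ ^ 2 * a * R + δ ^ 2 * b := by ring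

theorem le_mul_add_of_one_div_mul_sub_le {k c t d : ℝ} (hk : 0 < k) (h : 1 / k * t - c ≤ d) :
    t ≤ k * (d + c) := by
  rw [one_div_mul_eq_div, sub_le_iff_le_add, div_le_iff₀' hk] at h
  exact h

namespace IsGeodesic

variable {x z : X} {g : ℝ → X}

theorem continuousOn (hg : IsGeodesic x z g) : ContinuousOn g (Icc 0 (dist x z)) :=
  (LipschitzOnWith.of_dist_le_mul (K := 1) fun s hs t ht => by
    rw [hg.2.2 s hs t ht, NNReal.coe_one, one_mul, Real.dist_eq]).continuousOn

theorem dist_eq_sub (hg : IsGeodesic x z g) {a b : ℝ} (ha : 0 ≤ a) (hab : a ≤ b)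
    (hb : b ≤ dist x z) : dist (g a) (g b) = b - a := by
  rw [hg.2.2 a ⟨ha, hab.trans hb⟩ b ⟨ha.trans hab, hb⟩, abs_sub_comm, abs_of_nonneg (by linarith)]

theorem dist_left (hg : IsGeodesic x z g) {s : ℝ} (hs : s ∈ Icc 0 (dist x z)) :
    dist x (g s) = s := by
  conv_lhs => rw [← hg.1]
  rw [hg.dist_eq_sub le_rfl hs.1 hs.2, sub_zero]

theorem dist_right (hg : IsGeodesic x z g) {s : ℝ} (hs : s ∈ Icc 0 (dist x z)) :
    dist (g s) z = dist x z - s := by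
  conv_lhs => rw [← hg.2.1]
  exact hg.dist_eq_sub hs.1 hs.2 le_rfl

theorem restrict (hg : IsGeodesic x z g) {a b : ℝ} (ha : 0 ≤ a) (hab : a ≤ b)
    (hb : b ≤ dist x z) : IsGeodesic (g a) (g b) (fun s => g (a + s)) := by
  rw [IsGeodesic, hg.dist_eq_sub ha hab hb]
  refine ⟨by simp, by simp, fun s hs t ht => ?_⟩
  rw [hg.2.2 _ ⟨by linarith [hs.1], by linarith [hs.2]⟩ _ ⟨by linarith [ht.1], by linarith [ht.2]⟩]
  ring_nf

theorem reverse (hg : IsGeodesic x z g) : IsGeodesic z x (fun s => g (dist x z - s)) := by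
  refine ⟨by simpa using hg.2.1, by simpa [dist_comm] using hg.1, fun s hs t ht => ?_⟩
  rw [dist_comm z x] at hs ht
  rw [hg.2.2 _ ⟨by linarith [hs.2], by linarith [hs.1]⟩ _ ⟨by linarith [ht.2], by linarith [ht.1]⟩,
    abs_sub_comm]
  ring_nf

end IsGeodesic

namespace IsDiscretePath

variable {C : ℝ} {N M : ℕ} {p : ℕ → X} {x z : X}

theorem mono (hp : IsDiscretePath C N p x z) {C' : ℝ} (h : C ≤ C') :
    IsDiscretePath C' N p x z :=
  ⟨hp.1, hp.2.1, fun i hi => (hp.2.2 i hi).trans h⟩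

theorem take (hp : IsDiscretePath C N p x z) (hM : M ≤ N) : IsDiscretePath C M p x (p M) :=
  ⟨hp.1, rfl, fun i hi => hp.2.2 i (by omega)⟩

theorem drop (hp : IsDiscretePath C N p x z) (hM : M ≤ N) :
    IsDiscretePath C (N - M) (fun j => p (M + j)) (p M) z :=
  ⟨by simp, by simpa [Nat.add_sub_cancel' hM] using hp.2.1,
    fun i hi => by simpa [Nat.add_assoc] using hp.2.2 (M + i) (by omega)⟩

theorem append {N' : ℕ} {q : ℕ → X} {y : X} (hp : IsDiscretePath C N p x y)
    (hq : IsDiscretePath C N' q y z) :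
    IsDiscretePath C (N + N') (fun i => if i ≤ N then p i else q (i - N)) x z := by
  refine ⟨by simpa using hp.1, ?_, fun i hi => ?_⟩
  · rcases N'.eq_zero_or_pos with rfl | hN'
    · simpa [hp.2.1, ← hq.1] using hq.2.1
    · simpa [show ¬N + N' ≤ N by omega] using hq.2.1
  · rcases Nat.lt_or_ge i N with h | h
    · simpa [h.le, show i + 1 ≤ N by omega] using hp.2.2 i h
    · rcases h.eq_or_lt with rfl | h
      · simpa [← hp.2.1, hq.1] using hq.2.2 0 (by omega)
      · simpa [show ¬i ≤ N by omega, show ¬i + 1 ≤ N by omega, show i + 1 - N = i - N + 1 by omega]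
          using hq.2.2 (i - N) (by omega)

theorem map {K c : ℝ} {s : Set X} {f : X → Y} (hp : IsDiscretePath C N p x z)
    (hps : ∀ i ≤ N, p i ∈ s) (hK : 0 ≤ K)
    (hf : ∀ a ∈ s, ∀ b ∈ s, dist (f a) (f b) ≤ K * dist a b + c) :
    IsDiscretePath (K * C + c) N (f ∘ p) (f x) (f z) :=
  ⟨by simp [hp.1], by simp [hp.2.1], fun i hi =>
    (hf _ (hps i hi.le) _ (hps (i + 1) hi)).trans (by gcongr; exact hp.2.2 i hi)⟩

end IsDiscretePath

theorem forall_append_of_forall {α : Type*} {P : α → Prop} {N N' : ℕ} {p q : ℕ → α}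
    (hp : ∀ i ≤ N, P (p i)) (hq : ∀ i ≤ N', P (q i)) :
    ∀ i ≤ N + N', P (if i ≤ N then p i else q (i - N)) := by
  intro i hi
  split_ifs with h
  · exact hp i h
  · exact hq (i - N) (by omega)

theorem isDiscretePath_affine (a b : ℝ) {m : ℕ} (hm : 0 < m) :
    IsDiscretePath (|b - a| / m) m (fun i : ℕ => a + i / m * (b - a)) a b := by
  have hm' : (m : ℝ) ≠ 0 := by positivity
  refine ⟨by simp, by simp [hm'], fun i _ => ?_⟩
  rw [Real.dist_eq, show a + i / m * (b - a) - (a + ((i + 1 : ℕ) : ℝ) / m * (b - a))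
    = -((b - a) / m) by push_cast; field_simp; ring, abs_neg, abs_div, Nat.abs_cast]

theorem affine_mem_Icc {a b T : ℝ} (ha : a ∈ Icc 0 T) (hb : b ∈ Icc 0 T) {m i : ℕ} (hi : i ≤ m) :
    a + i / m * (b - a) ∈ Icc 0 T :=
  (convex_Icc 0 T).add_smul_sub_mem ha hb (t := (i / m : ℝ))
    ⟨by positivity, div_le_one_of_le₀ (by exact_mod_cast hi) (Nat.cast_nonneg m)⟩

theorem GeodesicSpace.exists_isDiscretePath (hX : GeodesicSpace X) (u w : X) {m : ℕ} (hm : 0 < m)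
    (hd : dist u w ≤ m) : ∃ p : ℕ → X, IsDiscretePath 1 m p u w ∧
      ∀ i ≤ m, dist u (p i) ≤ dist u w ∧ dist (p i) w ≤ dist u w := by
  obtain ⟨σ, hσ⟩ := hX u w
  have hmem : ∀ i ≤ m, (0 : ℝ) + i / m * (dist u w - 0) ∈ Icc 0 (dist u w) := fun i hi =>
    affine_mem_Icc ⟨le_rfl, dist_nonneg⟩ ⟨dist_nonneg, le_rfl⟩ hi
  have hpath := (isDiscretePath_affine 0 (dist u w) hm).map hmem zero_le_one (c := 0)
    fun a ha b hb => by rw [hσ.2.2 a ha b hb, Real.dist_eq, one_mul, add_zero]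
  rw [hσ.1, hσ.2.1] at hpath
  refine ⟨_, hpath.mono ?_, fun i hi => ?_⟩
  · rw [one_mul, add_zero, sub_zero, abs_of_nonneg dist_nonneg]
    exact div_le_one_of_le₀ hd (Nat.cast_nonneg m)
  · simp only [Function.comp_apply, hσ.dist_left (hmem i hi), hσ.dist_right (hmem i hi)]
    constructor <;> linarith [(hmem i hi).1, (hmem i hi).2]

theorem IsGeodesic.isQuasiGeodesic_comp {k c : ℝ} {f : Y → X} {y y' : Y} {g : ℝ → Y}
    (hg : IsGeodesic y y' g) (hf : IsQuasiIsometricEmbedding k c f) :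
    IsQuasiGeodesic k c (f y) (f y') (dist y y') (f ∘ g) :=
  ⟨dist_nonneg, by simp [hg.1], by simp [hg.2.1], fun a ha b hb => by
    simpa only [Function.comp_apply, hg.2.2 a ha b hb] using hf (g a) (g b)⟩

theorem IsQuasiGeodesic.discretelyConnected {k c T : ℝ} {x z : X} {q : ℝ → X}
    (hq : IsQuasiGeodesic k c x z T q) (hk : 0 < k) :
    DiscretelyConnected (k + c) k (k * c + 1) (q '' Icc 0 T) := by
  rintro _ ⟨a, ha, rfl⟩ _ ⟨b, hb, rfl⟩
  set m := ⌊|b - a|⌋₊ + 1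
  have hm : |b - a| < m := by push_cast [m]; exact Nat.lt_floor_add_one _
  have hmem : ∀ i ≤ m, a + i / m * (b - a) ∈ Icc 0 T := fun i hi => affine_mem_Icc ha hb hi
  have hpath := (isDiscretePath_affine a b (m := m) (by omega)).map (f := q) hmem hk.le
    fun s hs t ht => by rw [Real.dist_eq]; exact (hq.2.2.2 s hs t ht).2
  refine ⟨m, _, hpath.mono ?_, ?_, fun i hi => mem_image_of_mem q (hmem i hi)⟩
  · have : |b - a| / m ≤ 1 := div_le_one_of_le₀ hm.le (Nat.cast_nonneg m)
    nlinarith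
  · have hba : |b - a| ≤ k * (dist (q a) (q b) + c) :=
      le_mul_add_of_one_div_mul_sub_le hk (abs_sub_comm a b ▸ (hq.2.2.2 a ha b hb).1)
    have : (m : ℝ) ≤ |b - a| + 1 := by
      push_cast [m]; linarith [Nat.floor_le (abs_nonneg (b - a))]
    linarith

theorem IsGeodesic.dist_le_of_isDiscretePath_one {C : ℝ} {p : ℕ → X} {x z : X} {g : ℝ → X}
    (hg : IsGeodesic x z g) (hp : IsDiscretePath C 1 p x z) {t : ℝ} (ht : t ∈ Icc 0 (dist x z)) :
    dist (g t) (p 0) ≤ C := by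
  have hxz := hp.2.2 0 one_pos
  rw [hp.1, hp.2.1] at hxz
  rw [hp.1, dist_comm, hg.dist_left ht]
  exact ht.2.trans hxz

/-- Bisect the path and use the slimness of the triangle through its midpoint. -/
theorem SlimTriangles.exists_dist_le_of_isDiscretePath {δ C : ℝ} (hX : GeodesicSpace X)
    (hslim : SlimTriangles X δ) (hδ : 0 ≤ δ) (n : ℕ) {N : ℕ} {p : ℕ → X} {x z : X} {g : ℝ → X}
    (hp : IsDiscretePath C N p x z) (hN1 : 1 ≤ N) (hN : N ≤ 2 ^ n) (hg : IsGeodesic x z g)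
    {t : ℝ} (ht : t ∈ Icc 0 (dist x z)) : ∃ i ≤ N, dist (g t) (p i) ≤ δ * n + C := by
  induction n generalizing N p x z g t with
  | zero =>
    obtain rfl : N = 1 := by simp only [pow_zero] at hN; omega
    exact ⟨0, zero_le_one, by simpa using hg.dist_le_of_isDiscretePath_one hp ht⟩
  | succ n ih =>
    rcases hN1.eq_or_lt with rfl | hN2
    · refine ⟨0, zero_le_one, (hg.dist_le_of_isDiscretePath_one hp ht).trans ?_⟩
      have : 0 ≤ δ * (n + 1 : ℕ) := by positivity
      linarith
    rw [pow_succ] at hN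
    set M := N / 2
    obtain ⟨g₁, hg₁⟩ := hX x (p M)
    obtain ⟨g₂, hg₂⟩ := hX (p M) z
    obtain ⟨w, hw, hgw⟩ := hslim x (p M) z g₁ g₂ g hg₁ hg₂ hg (g t) (mem_image_of_mem g ht)
    rcases hw with ⟨s, hs, rfl⟩ | ⟨s, hs, rfl⟩
    · obtain ⟨i, hi, hd⟩ := ih (hp.take (by omega)) (by omega) (by omega) hg₁ hs
      refine ⟨i, by omega, ?_⟩
      push_cast
      linarith [dist_triangle (g t) (g₁ s) (p i)]
    · obtain ⟨i, hi, hd⟩ := ih (hp.drop (by omega)) (by omega) (by omega) hg₂ hs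
      refine ⟨M + i, by omega, ?_⟩
      push_cast
      linarith [dist_triangle (g t) (g₂ s) (p (M + i))]

/-- `R` is the largest distance from `G` to `S`, attained at `t₀`; the witness is `t₀ - 2R`, or `0`
when that is negative. -/
theorem IsGeodesic.exists_anchor {S : Set X} {x z : X} {G : ℝ → X} (hG : IsGeodesic x z G)
    (hx : x ∈ S) {R t₀ : ℝ} (ht₀ : t₀ ∈ Icc 0 (dist x z)) (hSfar : ∀ w ∈ S, R ≤ dist (G t₀) w)
    (hmax : ∀ t ∈ Icc 0 (dist x z), infDist (G t) S ≤ R) :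
    ∃ t ∈ Icc 0 t₀, t₀ - t ≤ 2 * R ∧ ∃ w ∈ S, dist (G t) w ≤ R + 1 ∧
      R - 1 + dist (G t) w ≤ dist (G t₀) (G t) := by
  have hR : 0 ≤ R := infDist_nonneg.trans (hmax t₀ ht₀)
  rcases le_or_gt (2 * R) t₀ with h | h
  · have hmem : t₀ - 2 * R ∈ Icc 0 (dist x z) := ⟨by linarith, by linarith [ht₀.2]⟩
    obtain ⟨w, hw, hd⟩ := (infDist_lt_iff ⟨x, hx⟩).1 ((hmax _ hmem).trans_lt (lt_add_one R))
    refine ⟨t₀ - 2 * R, ⟨hmem.1, by linarith⟩, by linarith, w, hw, hd.le, ?_⟩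
    rw [dist_comm (G t₀), hG.dist_eq_sub hmem.1 (by linarith) ht₀.2]
    linarith
  · refine ⟨0, ⟨le_rfl, ht₀.1⟩, by linarith, x, hx, ?_⟩
    rw [hG.1, dist_self]
    constructor <;> linarith [hSfar x hx]

theorem exists_isDiscretePath_outside_ball {C A B R : ℝ} {S : Set X} {o u₁ u₂ w₁ w₂ : X}
    (hX : GeodesicSpace X) (hS : DiscretelyConnected C A B S) (hA : 0 ≤ A) (hR : 0 ≤ R)
    (hSfar : ∀ w ∈ S, R ≤ dist o w) (hw₁ : w₁ ∈ S) (hw₂ : w₂ ∈ S)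
    (hd₁ : dist u₁ w₁ ≤ R + 1) (hd₂ : dist w₂ u₂ ≤ R + 1)
    (hfar₁ : R - 1 + dist u₁ w₁ ≤ dist o u₁) (hfar₂ : R - 1 + dist w₂ u₂ ≤ dist o u₂)
    (hu : dist u₁ u₂ ≤ 4 * R) :
    ∃ (N : ℕ) (p : ℕ → X), IsDiscretePath (max C 1) N p u₁ u₂ ∧ 1 ≤ N ∧
      (N : ℝ) ≤ (6 * A + 2) * R + (2 * A + B + 4) ∧ ∀ i ≤ N, R - 1 ≤ dist o (p i) := by
  set m := ⌊R⌋₊ + 2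
  have hRm : R + 1 ≤ m := by push_cast [m]; linarith [Nat.lt_floor_add_one R]
  have hmR : (m : ℝ) ≤ R + 2 := by push_cast [m]; linarith [Nat.floor_le hR]
  obtain ⟨p₁, hp₁, hp₁d⟩ := hX.exists_isDiscretePath u₁ w₁ (by omega) (hd₁.trans hRm)
  obtain ⟨p₃, hp₃, hp₃d⟩ := hX.exists_isDiscretePath w₂ u₂ (by omega) (hd₂.trans hRm)
  obtain ⟨N, p₂, hp₂, hN, hp₂S⟩ := hS w₁ hw₁ w₂ hw₂
  refine ⟨m + N + m, _, ((hp₁.mono (le_max_right C 1)).append (hp₂.mono (le_max_left C 1))).append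
    (hp₃.mono (le_max_right C 1)), by omega, ?_,
    forall_append_of_forall (P := fun w => R - 1 ≤ dist o w)
      (forall_append_of_forall (P := fun w => R - 1 ≤ dist o w) (fun i hi => ?_) (fun i hi => ?_))
      fun i hi => ?_⟩
  · have hw : dist w₁ w₂ ≤ 6 * R + 2 := by
      linarith [dist_triangle4 w₁ u₁ u₂ w₂, dist_comm w₁ u₁, dist_comm u₂ w₂]
    have := mul_le_mul_of_nonneg_left hw hA
    push_cast
    linarith
  · linarith [dist_triangle o (p₁ i) u₁, dist_comm (p₁ i) u₁, (hp₁d i hi).1]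
  · linarith [hSfar _ (hp₂S i hi)]
  · linarith [dist_triangle o (p₃ i) u₂, (hp₃d i hi).2]

/-- The core of the Morse lemma (Bridson–Haefliger III.H.1.7). Let `G t₀` be a point of `G` farthest
from `S`, at distance `R`. Joining the anchors on both sides of `t₀` through `S` gives a discrete
path of `O(R)` steps staying `R - 1` away from `G t₀`, while the subgeodesic through `G t₀` between
the anchors comes `δ log₂ N + C`-close to it. -/
theorem SlimTriangles.exists_le_clog_of_isMaxOn {δ C A B t₀ : ℝ} {S : Set X} {x z : X}
    {G : ℝ → X} (hX : GeodesicSpace X) (hslim : SlimTriangles X δ) (hδ : 0 ≤ δ)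
    (hS : DiscretelyConnected C A B S) (hA : 0 ≤ A) (hx : x ∈ S) (hz : z ∈ S)
    (hG : IsGeodesic x z G) (ht₀ : t₀ ∈ Icc 0 (dist x z))
    (hmax : ∀ t ∈ Icc 0 (dist x z), infDist (G t) S ≤ infDist (G t₀) S) :
    ∃ N : ℕ, (N : ℝ) ≤ (6 * A + 2) * infDist (G t₀) S + (2 * A + B + 4) ∧
      infDist (G t₀) S ≤ δ * Nat.clog 2 N + (max C 1 + 1) := by
  set R := infDist (G t₀) S
  have hSfar : ∀ w ∈ S, R ≤ dist (G t₀) w := fun w hw => infDist_le_dist_of_mem hw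
  obtain ⟨t₁, ht₁, ht₁R, w₁, hw₁, hd₁, hfar₁⟩ := hG.exists_anchor hx ht₀ hSfar hmax
  obtain ⟨s₂, hs₂, hs₂R, w₂, hw₂, hd₂, hfar₂⟩ := hG.reverse.exists_anchor hz (t₀ := dist x z - t₀)
    (by rw [dist_comm]; exact ⟨by linarith [ht₀.2], by linarith [ht₀.1]⟩)
    (by simpa only [sub_sub_cancel] using hSfar)
    (fun t ht => hmax _ ⟨by linarith [ht.2, dist_comm x z], by linarith [ht.1]⟩)
  set t₂ := dist x z - s₂
  simp only [sub_sub_cancel] at hfar₂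
  rw [dist_comm] at hd₂ hfar₂
  have ht₁₂ : t₁ ≤ t₂ := by linarith [hs₂.2, ht₁.2]
  have ht₂L : t₂ ≤ dist x z := by linarith [hs₂.1]
  have hsub := hG.restrict ht₁.1 ht₁₂ ht₂L
  have hlen := hG.dist_eq_sub ht₁.1 ht₁₂ ht₂L
  obtain ⟨N, p, hp, hN1, hNR, hfar⟩ := exists_isDiscretePath_outside_ball hX hS hA
    (infDist_nonneg.trans (hmax t₀ ht₀)) hSfar hw₁ hw₂ hd₁ hd₂ hfar₁ hfar₂ (by linarith)
  obtain ⟨i, hi, hdi⟩ := hslim.exists_dist_le_of_isDiscretePath hX hδ (Nat.clog 2 N) hp hN1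
    (Nat.le_pow_clog one_lt_two N) hsub (t := t₀ - t₁)
    (by rw [hlen]; exact ⟨by linarith [ht₁.2], by linarith [hs₂.2]⟩)
  rw [add_sub_cancel] at hdi
  exact ⟨N, hNR, by linarith [hfar i hi]⟩

theorem SlimTriangles.exists_forall_dist_le_of_discretelyConnected {δ : ℝ} (hX : GeodesicSpace X)
    (hslim : SlimTriangles X δ) (hδ : 0 ≤ δ) (C : ℝ) {A : ℝ} (hA : 0 ≤ A) (B : ℝ) :
    ∃ D, 0 ≤ D ∧ ∀ (S : Set X) (x z : X) (G : ℝ → X), DiscretelyConnected C A B S → x ∈ S →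
      z ∈ S → IsGeodesic x z G → ∀ t ∈ Icc 0 (dist x z), ∃ w ∈ S, dist (G t) w ≤ D := by
  obtain ⟨D, hD⟩ := exists_le_of_le_mul_clog δ (6 * A + 2) (2 * A + B + 4) (max C 1 + 1) hδ
  refine ⟨max D 0 + 1, by positivity, fun S x z G hS hx hz hG => ?_⟩
  obtain ⟨t₀, ht₀, hmax⟩ := isCompact_Icc.exists_isMaxOn (nonempty_Icc.2 dist_nonneg)
    ((continuous_infDist_pt S).comp_continuousOn hG.continuousOn)
  obtain ⟨N, hN, hlog⟩ := hslim.exists_le_clog_of_isMaxOn hX hδ hS hA hx hz hG ht₀ hmax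
  intro t ht
  obtain ⟨w, hw, hd⟩ := (infDist_lt_iff ⟨x, hx⟩).1 ((hmax ht).trans_lt
    (by linarith [hD _ N hN hlog, le_max_left D 0] : infDist (G t₀) S < max D 0 + 1))
  exact ⟨w, hw, hd.le⟩

theorem SlimTriangles.exists_forall_dist_le_of_isQuasiGeodesic {δ k : ℝ} (hX : GeodesicSpace X)
    (hslim : SlimTriangles X δ) (hδ : 0 ≤ δ) (hk : 0 < k) (c : ℝ) :
    ∃ D, 0 ≤ D ∧ ∀ (x z : X) (T : ℝ) (q G : ℝ → X), IsQuasiGeodesic k c x z T q →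
      IsGeodesic x z G → ∀ τ ∈ Icc 0 (dist x z), ∃ a ∈ Icc 0 T, dist (G τ) (q a) ≤ D := by
  obtain ⟨D, hD0, hD⟩ :=
    hslim.exists_forall_dist_le_of_discretelyConnected hX hδ (k + c) hk.le (k * c + 1)
  refine ⟨D, hD0, fun x z T q G hq hG τ hτ => ?_⟩
  obtain ⟨_, ⟨a, ha, rfl⟩, hd⟩ := hD _ x z G (hq.discretelyConnected hk)
    ⟨0, ⟨le_rfl, hq.1⟩, hq.2.1⟩ ⟨T, ⟨hq.1, le_rfl⟩, hq.2.2.1⟩ hG τ hτ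
  exact ⟨a, ha, hd⟩

/-- Splitting `q` at `s`, the intermediate value theorem gives a point `G τ` equidistant from the
two halves, hence near both; the two nearby points of `q` lie on either side of `s` and are close to
each other, so `q s` is close to them. -/
theorem IsQuasiGeodesic.exists_dist_le {k c T D : ℝ} {x z : X} {q G : ℝ → X}
    (hq : IsQuasiGeodesic k c x z T q) (hk : 0 < k) (hG : IsGeodesic x z G)
    (hnear : ∀ τ ∈ Icc 0 (dist x z), ∃ a ∈ Icc 0 T, dist (G τ) (q a) ≤ D) {s : ℝ}
    (hs : s ∈ Icc 0 T) :
    ∃ τ ∈ Icc 0 (dist x z), dist (q s) (G τ) ≤ k * (k * (2 * D + 2 + c)) + c + D + 1 := by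
  obtain ⟨-, hq0, hqT, hqd⟩ := hq
  set S₁ := q '' Icc 0 s
  set S₂ := q '' Icc s T
  have hsS₁ : q s ∈ S₁ := ⟨s, ⟨hs.1, le_rfl⟩, rfl⟩
  have hsS₂ : q s ∈ S₂ := ⟨s, ⟨le_rfl, hs.2⟩, rfl⟩
  obtain ⟨τ, hτ, hτ0⟩ : ∃ τ ∈ Icc 0 (dist x z), infDist (G τ) S₁ - infDist (G τ) S₂ = 0 := by
    refine intermediate_value_Icc dist_nonneg (((continuous_infDist_pt S₁).sub
      (continuous_infDist_pt S₂)).comp_continuousOn hG.continuousOn) ⟨?_, ?_⟩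
    · have : G 0 ∈ S₁ := ⟨0, ⟨le_rfl, hs.1⟩, by rw [hq0, hG.1]⟩
      simp only [Function.comp_apply, Pi.sub_apply, infDist_zero_of_mem this]
      linarith [infDist_nonneg (x := G 0) (s := S₂)]
    · have : G (dist x z) ∈ S₂ := ⟨T, ⟨hs.2, le_rfl⟩, by rw [hqT, hG.2.1]⟩
      simp only [Function.comp_apply, Pi.sub_apply, infDist_zero_of_mem this]
      linarith [infDist_nonneg (x := G (dist x z)) (s := S₁)]
  have hclose : infDist (G τ) S₁ ≤ D ∧ infDist (G τ) S₂ ≤ D := by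
    obtain ⟨a, ha, had⟩ := hnear τ hτ
    rcases le_total a s with has | has
    · have haS : q a ∈ S₁ := mem_image_of_mem q ⟨ha.1, has⟩
      have := infDist_le_dist_of_mem (x := G τ) haS
      constructor <;> linarith
    · have haS : q a ∈ S₂ := mem_image_of_mem q ⟨has, ha.2⟩
      have := infDist_le_dist_of_mem (x := G τ) haS
      constructor <;> linarith
  obtain ⟨_, ⟨a, ha, rfl⟩, had⟩ := (infDist_lt_iff ⟨_, hsS₁⟩).1 (hclose.1.trans_lt (lt_add_one D))
  obtain ⟨_, ⟨b, hb, rfl⟩, hbd⟩ := (infDist_lt_iff ⟨_, hsS₂⟩).1 (hclose.2.trans_lt (lt_add_one D))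
  have haT : a ∈ Icc 0 T := ⟨ha.1, ha.2.trans hs.2⟩
  have hbT : b ∈ Icc 0 T := ⟨hs.1.trans hb.1, hb.2⟩
  have hab : |a - b| ≤ k * (2 * D + 2 + c) := by
    refine le_mul_add_of_one_div_mul_sub_le hk ((hqd a haT b hbT).1.trans ?_)
    linarith [dist_triangle (q a) (G τ) (q b), dist_comm (q a) (G τ)]
  have hsb : dist (q s) (q b) ≤ k * (k * (2 * D + 2 + c)) + c := by
    have : |s - b| ≤ |a - b| := by
      rw [abs_sub_comm s, abs_sub_comm a, abs_of_nonneg (by linarith [hb.1]),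
        abs_of_nonneg (by linarith [hb.1, ha.2])]
      linarith [ha.2]
    have := mul_le_mul_of_nonneg_left (this.trans hab) hk.le
    linarith [(hqd s hs b hbT).2]
  exact ⟨τ, hτ, by linarith [dist_triangle (q s) (q b) (G τ), dist_comm (q b) (G τ)]⟩

end

theorem hyperbolic_of_quasiIsometry_general {X Y : Type*} [MetricSpace X] [MetricSpace Y]
    (hgX : GeodesicSpace X)
    (hhypX : ∃ δ : ℝ, 0 ≤ δ ∧ SlimTriangles X δ)
    (f : Y → X) (k c : ℝ) (hk : 1 ≤ k) (hc : 0 ≤ c)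
    (hqi₁ : ∀ y y' : Y, (1 / k) * dist y y' - c ≤ dist (f y) (f y') ∧
      dist (f y) (f y') ≤ k * dist y y' + c) :
    ∃ δ' : ℝ, 0 ≤ δ' ∧ SlimTriangles Y δ' := by
  obtain ⟨δ, hδ, hslim⟩ := hhypX
  have hk0 : 0 < k := by linarith
  obtain ⟨D, hD0, hnear⟩ := hslim.exists_forall_dist_le_of_isQuasiGeodesic hgX hδ hk0 c
  set D' := k * (k * (2 * D + 2 + c)) + c + D + 1
  refine ⟨k * (D' + δ + D + c), by positivity, ?_⟩
  rintro x y z g₁ g₂ g₃ hg₁ hg₂ hg₃ _ ⟨t, ht, rfl⟩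
  obtain ⟨G₁, hG₁⟩ := hgX (f x) (f y)
  obtain ⟨G₂, hG₂⟩ := hgX (f y) (f z)
  obtain ⟨G₃, hG₃⟩ := hgX (f x) (f z)
  have hq₃ := hg₃.isQuasiGeodesic_comp hqi₁
  obtain ⟨τ, hτ, hτd⟩ := hq₃.exists_dist_le hk0 hG₃ (hnear _ _ _ _ _ hq₃ hG₃) ht
  have hτd : dist (f (g₃ t)) (G₃ τ) ≤ D' := hτd
  have hpull : ∀ (w : X) (g : ℝ → Y) (a : ℝ), dist (G₃ τ) w ≤ δ → dist w (f (g a)) ≤ D →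
      dist (g₃ t) (g a) ≤ k * (D' + δ + D + c) := fun w g a hw ha =>
    le_mul_add_of_one_div_mul_sub_le hk0 ((hqi₁ _ _).1.trans
      (by linarith [dist_triangle4 (f (g₃ t)) (G₃ τ) w (f (g a)), hτd]))
  obtain ⟨w, hw, hwd⟩ := hslim _ _ _ G₁ G₂ G₃ hG₁ hG₂ hG₃ (G₃ τ) (mem_image_of_mem _ hτ)
  rcases hw with ⟨σ, hσ, rfl⟩ | ⟨σ, hσ, rfl⟩
  · obtain ⟨a, ha, had⟩ := hnear _ _ _ _ _ (hg₁.isQuasiGeodesic_comp hqi₁) hG₁ σ hσ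
    exact ⟨g₁ a, .inl (mem_image_of_mem _ ha), hpull _ g₁ a hwd had⟩
  · obtain ⟨a, ha, had⟩ := hnear _ _ _ _ _ (hg₂.isQuasiGeodesic_comp hqi₁) hG₂ σ hσ
    exact ⟨g₂ a, .inr (mem_image_of_mem _ ha), hpull _ g₂ a hwd had⟩

/-- Gromov hyperbolicity (via slim triangles) of geodesic spaces is invariant under
quasi-isometries: if `f : Y → X` is a `(k, c)`-quasi-isometry and `X` is hyperbolic,
then so is `Y`. -/
theorem hyperbolic_of_quasiIsometry {X Y : Type*} [MetricSpace X] [MetricSpace Y]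
    (hgX : GeodesicSpace X) (hgY : GeodesicSpace Y)
    (hhypX : ∃ δ : ℝ, 0 ≤ δ ∧ SlimTriangles X δ)
    (f : Y → X) (k c : ℝ) (hk : 1 ≤ k) (hc : 0 ≤ c)
    (hqi₁ : ∀ y y' : Y, (1 / k) * dist y y' - c ≤ dist (f y) (f y') ∧
      dist (f y) (f y') ≤ k * dist y y' + c)
    (hqi₂ : ∀ x : X, ∃ y : Y, dist x (f y) ≤ c) :
    ∃ δ' : ℝ, 0 ≤ δ' ∧ SlimTriangles Y δ' :=
  hyperbolic_of_quasiIsometry_general hgX hhypX f k c hk hc hqi₁
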